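/- arXiv:2107.14408 — 11 statements merged into one kernel-verified Lean document; each statement's English description precedes it below -/
import Mathlib

section
/- The binary operation * on the λ-polycyclic Bruck–Reilly extension 𝒫_λ(θ,S) is associative, so (𝒫_λ(θ,S), *) is a semigroup. -/
open scoped Classical

inductive PBR (Λ S : Type*) : Type _ where
  | zero : PBR Λ S
  | elt : S → List Λ → List Λ → PBR Λ S

namespace PBR

/-- Multiplication on the λ-polycyclic Bruck–Reilly extension `𝒫_λ(θ,S)`. -/
noncomputable def mul {Λ S : Type*} [Monoid S] (θ : S →* S) :
    PBR Λ S → PBR Λ S → PBR Λ S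
  | zero, _ => zero
  | elt _ _ _, zero => zero
  | elt s a₁ a₂, elt t b₁ b₂ =>
    if h : ∃ u : List Λ, b₁ = u ++ a₂ then
      elt ((⇑θ)^[h.choose.length] s * t) (h.choose ++ a₁) b₂
    else if h' : ∃ v : List Λ, a₂ = v ++ b₁ then
      elt (s * (⇑θ)^[h'.choose.length] t) a₁ (h'.choose ++ b₂)
    else zero

end PBR

section Aux

variable {Λ S : Type*} [Monoid S] (θ : S →* S)

lemma pbr_zero_mul (x : PBR Λ S) : PBR.mul θ PBR.zero x = PBR.zero := rfl

lemma pbr_mul_zero (x : PBR Λ S) : PBR.mul θ x PBR.zero = PBR.zero := by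
  cases x <;> rfl

lemma pbr_mul_left (s t : S) (a₁ a₂ b₂ u : List Λ) :
    PBR.mul θ (PBR.elt s a₁ a₂) (PBR.elt t (u ++ a₂) b₂) =
      PBR.elt ((⇑θ)^[u.length] s * t) (u ++ a₁) b₂ := by
  have h : ∃ w : List Λ, u ++ a₂ = w ++ a₂ := ⟨u, rfl⟩
  have hc : u = h.choose := List.append_cancel_right h.choose_spec
  simp only [PBR.mul, dif_pos h, ← hc]

lemma pbr_mul_right (s t : S) (a₁ b₁ b₂ v : List Λ) :
    PBR.mul θ (PBR.elt s a₁ (v ++ b₁)) (PBR.elt t b₁ b₂) =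
      PBR.elt (s * (⇑θ)^[v.length] t) a₁ (v ++ b₂) := by
  by_cases h : ∃ u : List Λ, b₁ = u ++ (v ++ b₁)
  · obtain ⟨u, hu⟩ := h
    have hlen := congrArg List.length hu
    simp only [List.length_append] at hlen
    have hu0 : u = [] := List.length_eq_zero_iff.mp (by omega)
    have hv0 : v = [] := List.length_eq_zero_iff.mp (by omega)
    subst hu0 hv0
    simpa using pbr_mul_left θ s t a₁ b₁ b₂ []
  · have h' : ∃ w : List Λ, v ++ b₁ = w ++ b₁ := ⟨v, rfl⟩
    have hc : v = h'.choose := List.append_cancel_right h'.choose_spec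
    simp only [PBR.mul, dif_neg h, dif_pos h', ← hc]

lemma pbr_mul_zero' (s t : S) (a₁ a₂ b₁ b₂ : List Λ)
    (h : ¬∃ u : List Λ, b₁ = u ++ a₂) (h' : ¬∃ v : List Λ, a₂ = v ++ b₁) :
    PBR.mul θ (PBR.elt s a₁ a₂) (PBR.elt t b₁ b₂) = PBR.zero := by
  simp only [PBR.mul, dif_neg h, dif_neg h']

end Aux

/-- the operation `*` on `𝒫_λ(θ,S)` is associative. -/
theorem pbr_mul_assoc {Λ S : Type*} [Monoid S] (θ : S →* S)
    (hθ : ∀ s : S, IsUnit (θ s)) :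
    ∀ x y z : PBR Λ S, PBR.mul θ (PBR.mul θ x y) z = PBR.mul θ x (PBR.mul θ y z) := by
  intro x y z
  cases x with
  | zero => simp [pbr_zero_mul]
  | elt s a₁ a₂ =>
  cases y with
  | zero => simp [pbr_zero_mul, pbr_mul_zero]
  | elt t b₁ b₂ =>
  cases z with
  | zero => simp [pbr_mul_zero]
  | elt r c₁ c₂ =>
  by_cases hA : ∃ u : List Λ, b₁ = u ++ a₂
  · obtain ⟨u, rfl⟩ := hA
    rw [pbr_mul_left]
    by_cases hB : ∃ w : List Λ, c₁ = w ++ b₂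
    · obtain ⟨w, rfl⟩ := hB
      rw [pbr_mul_left θ _ r (u ++ a₁) b₂ c₂ w, pbr_mul_left θ t r (u ++ a₂) b₂ c₂ w,
        show w ++ (u ++ a₂) = (w ++ u) ++ a₂ from (List.append_assoc w u a₂).symm,
        pbr_mul_left θ s _ a₁ a₂ c₂ (w ++ u)]
      simp [Function.iterate_add_apply, iterate_map_mul, mul_assoc, List.append_assoc]
    · by_cases hB' : ∃ p : List Λ, b₂ = p ++ c₁
      · obtain ⟨p, rfl⟩ := hB'
        rw [pbr_mul_right, pbr_mul_right, pbr_mul_left, mul_assoc]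
      · rw [pbr_mul_zero' θ _ _ _ _ _ _ hB hB', pbr_mul_zero' θ _ _ _ _ _ _ hB hB',
          pbr_mul_zero]
  · by_cases hA' : ∃ v : List Λ, a₂ = v ++ b₁
    · obtain ⟨v, rfl⟩ := hA'
      rw [pbr_mul_right]
      by_cases hB : ∃ w : List Λ, c₁ = w ++ b₂
      · obtain ⟨w, rfl⟩ := hB
        rw [pbr_mul_left]
        by_cases h1 : ∃ q : List Λ, w = q ++ v
        · obtain ⟨q, rfl⟩ := h1
          rw [List.append_assoc, pbr_mul_left, List.append_assoc, pbr_mul_left]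
          simp [Function.iterate_add_apply, iterate_map_mul, mul_assoc]
        · by_cases h2 : ∃ q : List Λ, v = q ++ w
          · obtain ⟨q, rfl⟩ := h2
            rw [List.append_assoc, pbr_mul_right, List.append_assoc, pbr_mul_right]
            simp [Function.iterate_add_apply, iterate_map_mul, mul_assoc]
          · rw [pbr_mul_zero', pbr_mul_zero']
            · intro ⟨q, hq⟩
              exact h1 ⟨q, List.append_cancel_right (by simpa [List.append_assoc] using hq)⟩
            · intro ⟨q, hq⟩
              exact h2 ⟨q, List.append_cancel_right (by simpa [List.append_assoc] using hq)⟩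
            · intro ⟨q, hq⟩
              exact h1 ⟨q, List.append_cancel_right (by simpa [List.append_assoc] using hq)⟩
            · intro ⟨q, hq⟩
              exact h2 ⟨q, List.append_cancel_right (by simpa [List.append_assoc] using hq)⟩
      · by_cases hB' : ∃ p : List Λ, b₂ = p ++ c₁
        · obtain ⟨p, rfl⟩ := hB'
          rw [show v ++ (p ++ c₁) = (v ++ p) ++ c₁ from (List.append_assoc v p c₁).symm,
            pbr_mul_right θ _ r a₁ c₁ c₂ (v ++ p), pbr_mul_right θ t r b₁ c₁ c₂ p,
            pbr_mul_right θ s _ a₁ b₁ (p ++ c₂) v]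
          simp [Function.iterate_add_apply, iterate_map_mul, mul_assoc, List.append_assoc]
        · rw [pbr_mul_zero' θ _ _ _ _ _ _ hB hB', pbr_mul_zero]
          rw [pbr_mul_zero']
          · intro ⟨q, hq⟩
            exact hB ⟨q ++ v, by simpa [List.append_assoc] using hq⟩
          · intro ⟨q, hq⟩
            rcases List.append_eq_append_iff.mp hq with ⟨e, he1, he2⟩ | ⟨e, he1, he2⟩
            · exact hB' ⟨e, he2⟩
            · exact hB ⟨e, he2.symm ▸ rfl⟩
    · rw [pbr_mul_zero' θ _ _ _ _ _ _ hA hA', pbr_zero_mul]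
      by_cases hB : ∃ w : List Λ, c₁ = w ++ b₂
      · obtain ⟨w, rfl⟩ := hB
        rw [pbr_mul_left, pbr_mul_zero']
        · intro ⟨q, hq⟩
          rcases List.append_eq_append_iff.mp hq with ⟨e, he1, he2⟩ | ⟨e, he1, he2⟩
          · exact hA ⟨e, he2⟩
          · exact hA' ⟨e, he2⟩
        · intro ⟨q, hq⟩
          exact hA' ⟨q ++ w, by simpa [List.append_assoc] using hq⟩
      · by_cases hB' : ∃ p : List Λ, b₂ = p ++ c₁
        · obtain ⟨p, rfl⟩ := hB'
          rw [pbr_mul_right, pbr_mul_zero' θ _ _ _ _ _ _ hA hA']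
        · rw [pbr_mul_zero' θ _ _ _ _ _ _ hB hB', pbr_mul_zero]
end

section
/- An element (t, b₁^{-1}b₂) of 𝒫_λ(θ,S) is an inverse of the element (s, a₁^{-1}a₂) (i.e., (s,a₁^{-1}a₂)*(t,b₁^{-1}b₂)*(s,a₁^{-1}a₂) = (s,a₁^{-1}a₂) and (t,b₁^{-1}b₂)*(s,a₁^{-1}a₂)*(t,b₁^{-1}b₂) = (t,b₁^{-1}b₂)) if and only if b₁ = a₂, b₂ = a₁, and t is an inverse of s in S. -/
open scoped Classical

namespace PBR

variable {Λ S : Type*} [Monoid S] (θ : S →* S)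

lemma mul_elt_suffix (s t : S) (a₁ a₂ b₁ b₂ u : List Λ) (h : b₁ = u ++ a₂) :
    mul θ (elt s a₁ a₂) (elt t b₁ b₂) =
      elt ((⇑θ)^[u.length] s * t) (u ++ a₁) b₂ := by
  have hex : ∃ w : List Λ, b₁ = w ++ a₂ := ⟨u, h⟩
  rw [mul, dif_pos hex]
  have hspec := hex.choose_spec
  have hu : hex.choose = u := List.append_cancel_right (hspec.symm.trans h)
  rw [hu]

lemma mul_elt_prefix (s t : S) (a₁ a₂ b₁ b₂ v : List Λ) (hv : v ≠ [])
    (h : a₂ = v ++ b₁) :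
    mul θ (elt s a₁ a₂) (elt t b₁ b₂) =
      elt (s * (⇑θ)^[v.length] t) a₁ (v ++ b₂) := by
  have hnex : ¬ ∃ u : List Λ, b₁ = u ++ a₂ := by
    rintro ⟨u, hu⟩
    have := congrArg List.length hu
    rw [h] at this
    simp at this
    have : v.length = 0 := by omega
    exact hv (List.length_eq_zero_iff.mp this)
  have hex : ∃ w : List Λ, a₂ = w ++ b₁ := ⟨v, h⟩
  rw [mul, dif_neg hnex, dif_pos hex]
  have hspec := hex.choose_spec
  have hu : hex.choose = v := List.append_cancel_right (hspec.symm.trans h)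
  rw [hu]

lemma tripleprod (s t : S) (a₁ a₂ : List Λ) :
    mul θ (mul θ (elt s a₁ a₂) (elt t a₂ a₁)) (elt s a₁ a₂) =
      elt (s * t * s) a₁ a₂ := by
  rw [mul_elt_suffix θ s t a₁ a₂ a₂ a₁ [] (by simp)]
  rw [mul_elt_suffix θ _ s ([] ++ a₁) a₁ a₁ a₂ [] (by simp)]
  simp

end PBR

/-- `(t, b₁⁻¹b₂)` is an inverse of `(s, a₁⁻¹a₂)` iff `b₁ = a₂`, `b₂ = a₁`
and `t` is an inverse of `s` in `S`. -/
theorem pbr_inverse_iff {Λ S : Type*} [Monoid S] (θ : S →* S)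
    (hθ : ∀ s : S, IsUnit (θ s)) (s t : S) (a₁ a₂ b₁ b₂ : List Λ) :
    (PBR.mul θ (PBR.mul θ (PBR.elt s a₁ a₂) (PBR.elt t b₁ b₂)) (PBR.elt s a₁ a₂) =
        PBR.elt s a₁ a₂ ∧
      PBR.mul θ (PBR.mul θ (PBR.elt t b₁ b₂) (PBR.elt s a₁ a₂)) (PBR.elt t b₁ b₂) =
        PBR.elt t b₁ b₂) ↔
      b₁ = a₂ ∧ b₂ = a₁ ∧ s * t * s = s ∧ t * s * t = t := by
  constructor
  · rintro ⟨h1, h2⟩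
    suffices key : b₁ = a₂ ∧ b₂ = a₁ by
      obtain ⟨rfl, rfl⟩ := key
      rw [PBR.tripleprod] at h1 h2
      injection h1 with hs _ _
      injection h2 with ht _ _
      exact ⟨rfl, rfl, hs, ht⟩
    by_cases hu : ∃ u : List Λ, b₁ = u ++ a₂
    · obtain ⟨u, rfl⟩ := hu
      rw [PBR.mul_elt_suffix θ s t a₁ a₂ _ b₂ u rfl] at h1
      by_cases hw : ∃ w : List Λ, a₁ = w ++ b₂
      · obtain ⟨w, hw⟩ := hw
        rw [PBR.mul_elt_suffix θ _ s (u ++ a₁) b₂ a₁ a₂ w hw] at h1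
        injection h1 with hs ha hb
        have hlen := congrArg List.length ha
        simp at hlen
        obtain ⟨hw0, hu0⟩ : w = [] ∧ u = [] :=
          ⟨List.length_eq_zero_iff.mp (by omega), List.length_eq_zero_iff.mp (by omega)⟩
        subst hw0; subst hu0
        simp at hw
        exact ⟨by simp, hw.symm⟩
      · by_cases hv : ∃ v : List Λ, b₂ = v ++ a₁
        · obtain ⟨v, rfl⟩ := hv
          have hvne : v ≠ [] := by rintro rfl; exact hw ⟨[], by simp⟩
          rw [PBR.mul_elt_prefix θ _ s (u ++ a₁) (v ++ a₁) a₁ a₂ v hvne rfl] at h1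
          injection h1 with _ ha hb
          have := congrArg List.length hb
          simp at this
          exact absurd this hvne
        · rw [PBR.mul, dif_neg hw, dif_neg hv] at h1
          cases h1
    · by_cases hv : ∃ v : List Λ, a₂ = v ++ b₁
      · obtain ⟨v, rfl⟩ := hv
        have hvne : v ≠ [] := by rintro rfl; exact hu ⟨[], by simp⟩
        rw [PBR.mul_elt_prefix θ s t a₁ (v ++ b₁) b₁ b₂ v hvne rfl] at h1
        by_cases hw : ∃ w : List Λ, a₁ = w ++ (v ++ b₂)
        · obtain ⟨w, hw⟩ := hw
          rw [PBR.mul_elt_suffix θ _ s a₁ (v ++ b₂) a₁ (v ++ b₁) w hw] at h1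
          injection h1 with _ ha _
          have hw0 : w = [] := by
            have := congrArg List.length ha
            simp at this
            exact this
          subst hw0
          simp at hw
          rw [PBR.mul_elt_suffix θ t s b₁ b₂ a₁ (v ++ b₁) v hw] at h2
          rw [PBR.mul_elt_prefix θ _ t (v ++ b₁) (v ++ b₁) b₁ b₂ v hvne rfl] at h2
          injection h2 with _ hb _
          have := congrArg List.length hb
          simp at this
          exact absurd this hvne
        · by_cases hw2 : ∃ w : List Λ, (v ++ b₂) = w ++ a₁
          · obtain ⟨w, hw2⟩ := hw2
            have hwne : w ≠ [] := by
              rintro rfl; exact hw ⟨[], by simpa using hw2.symm⟩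
            rw [PBR.mul_elt_prefix θ _ s a₁ (v ++ b₂) a₁ (v ++ b₁) w hwne hw2] at h1
            injection h1 with _ _ hb
            have := congrArg List.length hb
            simp at this
            exact absurd this hwne
          · rw [PBR.mul, dif_neg hw, dif_neg hw2] at h1
            cases h1
      · rw [PBR.mul, dif_neg hu, dif_neg hv] at h1
        cases h1
  · rintro ⟨rfl, rfl, hsts, htst⟩
    rw [PBR.tripleprod, PBR.tripleprod, hsts, htst]
    exact ⟨rfl, rfl⟩
end

section
/- The semigroup 𝒫_λ(θ,S) is regular (every element has an inverse) if and only if the monoid S is regular. -/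
open scoped Classical

namespace PBR

lemma choose_eq {Λ : Type*} {b₁ a₂ u : List Λ} (h : ∃ u' : List Λ, b₁ = u' ++ a₂)
    (hu : b₁ = u ++ a₂) : h.choose = u :=
  List.append_cancel_right (h.choose_spec ▸ hu)

lemma mul_left {Λ S : Type*} [Monoid S] (θ : S →* S) (s t : S) (a₁ a₂ b₂ u : List Λ) :
    PBR.mul θ (.elt s a₁ a₂) (.elt t (u ++ a₂) b₂)
      = .elt ((⇑θ)^[u.length] s * t) (u ++ a₁) b₂ := by
  have h : ∃ u' : List Λ, u ++ a₂ = u' ++ a₂ := ⟨u, rfl⟩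
  simp only [mul, dif_pos h, choose_eq h rfl]

lemma mul_right {Λ S : Type*} [Monoid S] (θ : S →* S) (s t : S) (a₁ b₁ b₂ v : List Λ)
    (hv : v ≠ []) :
    PBR.mul θ (.elt s a₁ (v ++ b₁)) (.elt t b₁ b₂)
      = .elt (s * (⇑θ)^[v.length] t) a₁ (v ++ b₂) := by
  have h : ¬ ∃ u : List Λ, b₁ = u ++ (v ++ b₁) := by
    rintro ⟨u, hu⟩
    have hl := congrArg List.length hu
    simp [List.length_append] at hl
    exact hv (List.length_eq_zero_iff.mp (by omega))
  have h' : ∃ v' : List Λ, v ++ b₁ = v' ++ b₁ := ⟨v, rfl⟩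
  simp only [mul, dif_neg h, dif_pos h', choose_eq h' rfl]

end PBR

/-- `𝒫_λ(θ,S)` is regular iff `S` is regular. -/
theorem pbr_regular_iff {Λ S : Type*} [Monoid S] (θ : S →* S)
    (hθ : ∀ s : S, IsUnit (θ s)) :
    (∀ x : PBR Λ S, ∃ y : PBR Λ S,
        PBR.mul θ (PBR.mul θ x y) x = x ∧ PBR.mul θ (PBR.mul θ y x) y = y) ↔
      (∀ s : S, ∃ t : S, s * t * s = s ∧ t * s * t = t) := by
  constructor
  · intro H s
    obtain ⟨y, h1, h2⟩ := H (PBR.elt s [] [])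
    cases y with
    | zero => simp [PBR.mul] at h1
    | elt t b₁ b₂ =>
      have hxy : PBR.mul θ (PBR.elt s [] []) (PBR.elt t b₁ b₂)
          = PBR.elt ((⇑θ)^[b₁.length] s * t) b₁ b₂ := by
        have := PBR.mul_left θ (Λ := Λ) s t [] [] b₂ b₁
        simpa using this
      rw [hxy] at h1
      rcases eq_or_ne b₂ [] with hb₂ | hb₂
      · subst hb₂
        have := PBR.mul_left θ (Λ := Λ) ((⇑θ)^[b₁.length] s * t) s b₁ [] [] []
        simp only [List.nil_append, List.length_nil, Function.iterate_zero, id] at this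
        rw [this] at h1
        -- h1 : elt (θ^[|b₁|] s * t * s) b₁ [] = elt s [] []
        obtain ⟨hs, hb₁, -⟩ := PBR.elt.inj h1
        subst hb₁
        simp only [List.length_nil, Function.iterate_zero, id] at hs
        refine ⟨t, hs, ?_⟩
        have hyx : PBR.mul θ (PBR.elt t ([]:List Λ) []) (PBR.elt s [] [])
            = PBR.elt (t * s) [] [] := by
          have := PBR.mul_left θ (Λ := Λ) t s [] [] [] []
          simpa using this
        rw [hyx] at h2
        have := PBR.mul_left θ (Λ := Λ) (t * s) t [] [] [] []
        simp only [List.nil_append, List.length_nil, Function.iterate_zero, id] at this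
        rw [this] at h2
        exact (PBR.elt.inj h2).1
      · exfalso
        have := PBR.mul_right θ (Λ := Λ) ((⇑θ)^[b₁.length] s * t) s b₁ [] [] b₂ hb₂
        simp only [List.append_nil] at this
        rw [this] at h1
        obtain ⟨-, -, hb⟩ := PBR.elt.inj h1
        exact hb₂ hb
  · intro H x
    cases x with
    | zero => exact ⟨PBR.zero, by simp [PBR.mul], by simp [PBR.mul]⟩
    | elt s a₁ a₂ =>
      obtain ⟨t, hst, hts⟩ := H s
      refine ⟨PBR.elt t a₂ a₁, ?_, ?_⟩
      · have h1 : PBR.mul θ (PBR.elt s a₁ a₂) (PBR.elt t a₂ a₁)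
            = PBR.elt (s * t) a₁ a₁ := by
          have := PBR.mul_left θ s t a₁ a₂ a₁ []
          simpa using this
        rw [h1]
        have := PBR.mul_left θ (s * t) s a₁ a₁ a₂ []
        simpa [hst] using this
      · have h1 : PBR.mul θ (PBR.elt t a₂ a₁) (PBR.elt s a₁ a₂)
            = PBR.elt (t * s) a₂ a₂ := by
          have := PBR.mul_left θ t s a₂ a₁ a₂ []
          simpa using this
        rw [h1]
        have := PBR.mul_left θ (t * s) t a₂ a₂ a₁ []
        simpa [hts] using this
end

section
/- The semigroup 𝒫_λ(θ,S) is an inverse semigroup (every element has a unique inverse) if and only if S is an inverse semigroup. -/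
open scoped Classical

section Aux

variable {Λ S : Type*} [Monoid S] (θ : S →* S)

lemma pbr_mul_defL (s t : S) (a₁ a₂ b₂ u : List Λ) :
    PBR.mul θ (.elt s a₁ a₂) (.elt t (u ++ a₂) b₂) =
      .elt ((⇑θ)^[u.length] s * t) (u ++ a₁) b₂ := by
  have h : ∃ u' : List Λ, u ++ a₂ = u' ++ a₂ := ⟨u, rfl⟩
  have hc : h.choose = u := (List.append_cancel_right h.choose_spec.symm)
  show (if h : _ then _ else _) = _
  rw [dif_pos h, hc]

lemma pbr_mul_defL' (s t : S) (a a₂ b₂ : List Λ) :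
    PBR.mul θ (.elt s a a₂) (.elt t a₂ b₂) = .elt (s * t) a b₂ := by
  simpa using pbr_mul_defL θ s t a a₂ b₂ []

lemma pbr_mul_defR (s t : S) (a₁ b₁ b₂ v : List Λ)
    (h : ¬ ∃ u : List Λ, b₁ = u ++ (v ++ b₁)) :
    PBR.mul θ (.elt s a₁ (v ++ b₁)) (.elt t b₁ b₂) =
      .elt (s * (⇑θ)^[v.length] t) a₁ (v ++ b₂) := by
  have h' : ∃ v' : List Λ, v ++ b₁ = v' ++ b₁ := ⟨v, rfl⟩
  have hc : h'.choose = v := (List.append_cancel_right h'.choose_spec.symm)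
  show (if _ : _ then _ else if _ : _ then _ else _) = _
  rw [dif_neg h, dif_pos h', hc]

lemma pbr_mul_zero_of (s t : S) (a₁ a₂ b₁ b₂ : List Λ)
    (h : ¬ ∃ u : List Λ, b₁ = u ++ a₂) (h' : ¬ ∃ v : List Λ, a₂ = v ++ b₁) :
    PBR.mul θ (.elt s a₁ a₂) (.elt t b₁ b₂) = .zero := by
  show (if _ : _ then _ else if _ : _ then _ else _) = _
  rw [dif_neg h, dif_neg h']

lemma pbr_mul_zero_right (x : PBR Λ S) : PBR.mul θ x .zero = .zero := by
  cases x <;> rfl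

lemma no_absorb (b₁ v : List Λ) (hv : v ≠ []) : ¬ ∃ u : List Λ, b₁ = u ++ (v ++ b₁) := by
  rintro ⟨u, hu⟩
  have hl := congrArg List.length hu
  simp only [List.length_append] at hl
  have : v.length ≠ 0 := fun h => hv (List.length_eq_zero_iff.mp h)
  omega

/-- Characterization of weak inverses of a nonzero element. -/
lemma pbr_inv_char (s : S) (a₁ a₂ : List Λ) (y : PBR Λ S) :
    (PBR.mul θ (PBR.mul θ (.elt s a₁ a₂) y) (.elt s a₁ a₂) = .elt s a₁ a₂ ∧
      PBR.mul θ (PBR.mul θ y (.elt s a₁ a₂)) y = y) ↔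
    ∃ t : S, y = .elt t a₂ a₁ ∧ s * t * s = s ∧ t * s * t = t := by
  constructor
  · rintro ⟨h1, h2⟩
    cases y with
    | zero =>
      rw [pbr_mul_zero_right] at h1
      exact absurd h1 (by simp [PBR.mul])
    | elt t b₁ b₂ =>
      by_cases hA : ∃ u : List Λ, b₁ = u ++ a₂
      · obtain ⟨u, rfl⟩ := hA
        rw [pbr_mul_defL] at h1
        by_cases hA1 : ∃ u' : List Λ, a₁ = u' ++ b₂
        · obtain ⟨u', rfl⟩ := hA1
          rw [pbr_mul_defL] at h1
          -- components
          have hlist : u' ++ (u ++ (u' ++ b₂)) = u' ++ b₂ := by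
            injection h1 with _ h _
          have hu' : u' = [] ∧ u = [] := by
            have hl := congrArg List.length hlist
            simp only [List.length_append] at hl
            exact ⟨List.length_eq_zero_iff.mp (by omega), List.length_eq_zero_iff.mp (by omega)⟩
          obtain ⟨rfl, rfl⟩ := hu'
          simp only [List.nil_append, List.length_nil, Function.iterate_zero, id_eq] at h1 h2 ⊢
          have hsts : s * t * s = s := by injection h1
          refine ⟨t, rfl, hsts, ?_⟩
          rw [pbr_mul_defL' θ t s a₂ b₂ a₂, pbr_mul_defL' θ (t * s) t a₂ a₂ b₂] at h2
          injection h2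
        · by_cases hA2 : ∃ v' : List Λ, b₂ = v' ++ a₁
          · obtain ⟨v', rfl⟩ := hA2
            have hv' : v' ≠ [] := by
              rintro rfl
              exact hA1 ⟨[], by simp⟩
            rw [pbr_mul_defR θ _ _ _ _ _ v' (no_absorb _ _ hv')] at h1
            have : v' ++ a₂ = a₂ := by injection h1 with _ _ h
            have hl := congrArg List.length this
            simp only [List.length_append] at hl
            exact absurd (List.length_eq_zero_iff.mp (by omega)) hv'
          · rw [pbr_mul_zero_of θ _ _ _ _ _ _ hA1 hA2] at h1
            exact absurd h1 (by simp [PBR.mul])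
      · by_cases hB : ∃ v : List Λ, a₂ = v ++ b₁
        · obtain ⟨v, rfl⟩ := hB
          have hv : v ≠ [] := by
            rintro rfl
            exact hA ⟨[], by simp⟩
          rw [pbr_mul_defR θ _ _ _ _ _ v hA] at h1
          exfalso
          -- x*y = elt (s * θ^|v| t) a₁ (v ++ b₂); multiply by x = elt s a₁ (v ++ b₁)
          by_cases hC : ∃ u' : List Λ, a₁ = u' ++ (v ++ b₂)
          · obtain ⟨u', ha₁⟩ := hC
            rw [ha₁, pbr_mul_defL] at h1
            have : u' ++ (u' ++ (v ++ b₂)) = u' ++ (v ++ b₂) := by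
              injection h1 with _ h _
            have hu' : u' = [] := by
              have hl := congrArg List.length this
              simp only [List.length_append] at hl
              exact List.length_eq_zero_iff.mp (by omega)
            subst hu'
            simp only [List.nil_append] at ha₁
            -- now a₁ = v ++ b₂; use h2
            rw [ha₁] at h2
            rw [pbr_mul_defL θ t s b₁ b₂ (v ++ b₁) v] at h2
            rw [pbr_mul_defR θ _ _ _ _ _ v (no_absorb _ _ hv)] at h2
            have : v ++ b₁ = b₁ := by injection h2 with _ h _
            have hl := congrArg List.length this
            simp only [List.length_append] at hl
            exact hv (List.length_eq_zero_iff.mp (by omega))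
          · by_cases hD : ∃ v' : List Λ, v ++ b₂ = v' ++ a₁
            · obtain ⟨v', hD⟩ := hD
              rw [hD, pbr_mul_defR θ _ _ _ _ _ v' (fun ⟨u, hu⟩ => hC ⟨u, by rw [hD]; exact hu⟩)] at h1
              have : v' ++ (v ++ b₁) = v ++ b₁ := by injection h1 with _ _ h
              have hv' : v' = [] := by
                have hl := congrArg List.length this
                simp only [List.length_append] at hl
                exact List.length_eq_zero_iff.mp (by omega)
              subst hv'
              simp only [List.nil_append] at hD
              exact hC ⟨[], by simp [hD]⟩
            · rw [pbr_mul_zero_of θ _ _ _ _ _ _ hC hD] at h1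
              exact absurd h1 (by simp [PBR.mul])
        · rw [pbr_mul_zero_of θ _ _ _ _ _ _ hA hB] at h1
          exact absurd h1 (by simp [PBR.mul])
  · rintro ⟨t, rfl, h1, h2⟩
    constructor
    · rw [pbr_mul_defL' θ s t a₁ a₂ a₁, pbr_mul_defL' θ (s * t) s a₁ a₁ a₂, h1]
    · rw [pbr_mul_defL' θ t s a₂ a₁ a₂, pbr_mul_defL' θ (t * s) t a₂ a₂ a₁, h2]

end Aux

/-- `𝒫_λ(θ,S)` is an inverse semigroup iff `S` is an inverse semigroup. -/
theorem pbr_inverse_semigroup_iff {Λ S : Type*} [Monoid S] (θ : S →* S)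
    (hθ : ∀ s : S, IsUnit (θ s)) :
    (∀ x : PBR Λ S, ∃! y : PBR Λ S,
        PBR.mul θ (PBR.mul θ x y) x = x ∧ PBR.mul θ (PBR.mul θ y x) y = y) ↔
      (∀ s : S, ∃! t : S, s * t * s = s ∧ t * s * t = t) := by
  constructor
  · intro H s
    obtain ⟨y, hy, huniq⟩ := H (.elt s ([] : List Λ) [])
    obtain ⟨t, rfl, h1, h2⟩ := (pbr_inv_char θ s [] [] y).mp hy
    refine ⟨t, ⟨h1, h2⟩, ?_⟩
    intro t' ⟨h1', h2'⟩
    have := huniq (.elt t' [] []) ((pbr_inv_char θ s [] [] _).mpr ⟨t', rfl, h1', h2'⟩)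
    injection this
  · intro H x
    cases x with
    | zero =>
      refine ⟨.zero, ⟨rfl, rfl⟩, ?_⟩
      rintro y ⟨-, hy2⟩
      rw [pbr_mul_zero_right] at hy2
      exact hy2.symm
    | elt s a₁ a₂ =>
      obtain ⟨t, ⟨h1, h2⟩, huniq⟩ := H s
      refine ⟨.elt t a₂ a₁, (pbr_inv_char θ s a₁ a₂ _).mpr ⟨t, rfl, h1, h2⟩, ?_⟩
      intro y hy
      obtain ⟨t', rfl, h1', h2'⟩ := (pbr_inv_char θ s a₁ a₂ y).mp hy
      rw [huniq t' ⟨h1', h2'⟩]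
end

section
/- Two nonzero elements of 𝒫_λ(θ,S) satisfy (s, a₁^{-1}a₂) ℒ (t, b₁^{-1}b₂) in Green's ℒ-relation (i.e., they generate the same principal left ideal) if and only if s ℒ t in S and a₂ = b₂. -/
open scoped Classical

private lemma pbr_nil_of_self_append {Λ : Type*} {l u : List Λ} (h : l = u ++ l) :
    u = [] := by
  have := congrArg List.length h
  simpa using this

private lemma pbr_mul_elt_cases {Λ S : Type*} [Monoid S] (θ : S →* S)
    {s t x : S} {a₁ a₂ b₁ b₂ c₁ c₂ : List Λ}
    (h : PBR.elt s a₁ a₂ = PBR.mul θ (PBR.elt x c₁ c₂) (PBR.elt t b₁ b₂)) :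
    (∃ u : List Λ, b₁ = u ++ c₂ ∧ s = (⇑θ)^[u.length] x * t ∧ a₂ = b₂) ∨
    (∃ v : List Λ, c₂ = v ++ b₁ ∧ s = x * (⇑θ)^[v.length] t ∧ a₂ = v ++ b₂) := by
  rw [PBR.mul] at h
  split_ifs at h with h1 h2
  · simp only [PBR.elt.injEq] at h
    exact Or.inl ⟨h1.choose, h1.choose_spec, h.1, h.2.2⟩
  · simp only [PBR.elt.injEq] at h
    exact Or.inr ⟨h2.choose, h2.choose_spec, h.1, h.2.2⟩

/-- Green's `ℒ`-relation on `𝒫_λ(θ,S)` for nonzero elements. -/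
theorem pbr_green_L_iff {Λ S : Type*} [Monoid S] (θ : S →* S)
    (hθ : ∀ s : S, IsUnit (θ s)) (s t : S) (a₁ a₂ b₁ b₂ : List Λ) :
    ((∃ p : PBR Λ S, PBR.elt s a₁ a₂ = PBR.mul θ p (PBR.elt t b₁ b₂)) ∧
      (∃ q : PBR Λ S, PBR.elt t b₁ b₂ = PBR.mul θ q (PBR.elt s a₁ a₂))) ↔
      ((∃ p : S, s = p * t) ∧ (∃ q : S, t = q * s)) ∧ a₂ = b₂ := by
  constructor
  · rintro ⟨⟨p, hp⟩, ⟨q, hq⟩⟩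
    cases p with
    | zero => exact nomatch (hp.trans (by rw [PBR.mul]) : PBR.elt s a₁ a₂ = PBR.zero)
    | elt x c₁ c₂ =>
      cases q with
      | zero => exact nomatch (hq.trans (by rw [PBR.mul]) : PBR.elt t b₁ b₂ = PBR.zero)
      | elt y d₁ d₂ =>
        rcases pbr_mul_elt_cases θ hp with ⟨u, _, hs, hab⟩ | ⟨v, _, hs, hab⟩ <;>
        rcases pbr_mul_elt_cases θ hq with ⟨w, _, ht, hba⟩ | ⟨z, _, ht, hba⟩
        · exact ⟨⟨⟨_, hs⟩, ⟨_, ht⟩⟩, hab⟩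
        · have hz : z = [] := pbr_nil_of_self_append (hab ▸ hba)
          subst hz
          simp only [List.length_nil, Function.iterate_zero, id] at ht
          exact ⟨⟨⟨_, hs⟩, ⟨_, ht⟩⟩, hab⟩
        · have hv : v = [] := pbr_nil_of_self_append (hba ▸ hab)
          subst hv
          simp only [List.length_nil, Function.iterate_zero, id] at hs
          simp only [List.nil_append] at hab
          exact ⟨⟨⟨_, hs⟩, ⟨_, ht⟩⟩, hab⟩
        · -- a₂ = v ++ b₂ and b₂ = z ++ a₂
          have h1 : a₂ = v ++ z ++ a₂ := by
            rw [List.append_assoc, ← hba]; exact hab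
          have h2 : v ++ z = [] := pbr_nil_of_self_append h1
          have hv : v = [] := List.append_eq_nil_iff.mp h2 |>.1
          have hz : z = [] := List.append_eq_nil_iff.mp h2 |>.2
          subst hv; subst hz
          simp only [List.length_nil, Function.iterate_zero, id] at hs ht
          simp only [List.nil_append] at hab
          exact ⟨⟨⟨_, hs⟩, ⟨_, ht⟩⟩, hab⟩
  · rintro ⟨⟨⟨p, hp⟩, ⟨q, hq⟩⟩, rfl⟩
    constructor
    · refine ⟨PBR.elt p a₁ b₁, ?_⟩
      rw [PBR.mul]
      have h1 : ∃ u : List Λ, b₁ = u ++ b₁ := ⟨[], by simp⟩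
      rw [dif_pos h1]
      have : h1.choose = [] := pbr_nil_of_self_append h1.choose_spec
      rw [this]
      simp [hp]
    · refine ⟨PBR.elt q b₁ a₁, ?_⟩
      rw [PBR.mul]
      have h1 : ∃ u : List Λ, a₁ = u ++ a₁ := ⟨[], by simp⟩
      rw [dif_pos h1]
      have : h1.choose = [] := pbr_nil_of_self_append h1.choose_spec
      rw [this]
      simp [hq]
end

section
/- Two nonzero elements of 𝒫_λ(θ,S) satisfy (s, a₁^{-1}a₂) ℛ (t, b₁^{-1}b₂) in Green's ℛ-relation (same principal right ideal) if and only if s ℛ t in S and a₁ = b₁. -/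
open scoped Classical

lemma self_append_nil {Λ : Type*} {b u : List Λ} (h : b = u ++ b) : u = [] := by
  have := congrArg List.length h
  simp at this
  exact this

lemma mul_elt_cases {Λ S : Type*} [Monoid S] (θ : S →* S)
    {s t r : S} {a₁ a₂ b₁ b₂ c₁ c₂ : List Λ}
    (h : PBR.elt s a₁ a₂ = PBR.mul θ (PBR.elt t b₁ b₂) (PBR.elt r c₁ c₂)) :
    (∃ u : List Λ, a₁ = u ++ b₁ ∧ s = (⇑θ)^[u.length] t * r) ∨
    (a₁ = b₁ ∧ ∃ r' : S, s = t * r') := by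
  rw [PBR.mul] at h
  split_ifs at h with h1 h2
  · obtain ⟨hs, ha, _⟩ := PBR.elt.injEq .. ▸ h
    exact Or.inl ⟨h1.choose, ha, hs⟩
  · obtain ⟨hs, ha, _⟩ := PBR.elt.injEq .. ▸ h
    exact Or.inr ⟨ha, _, hs⟩

/-- Green's `ℛ`-relation on `𝒫_λ(θ,S)` for nonzero elements. -/
theorem pbr_green_R_iff {Λ S : Type*} [Monoid S] (θ : S →* S)
    (hθ : ∀ s : S, IsUnit (θ s)) (s t : S) (a₁ a₂ b₁ b₂ : List Λ) :
    ((∃ p : PBR Λ S, PBR.elt s a₁ a₂ = PBR.mul θ (PBR.elt t b₁ b₂) p) ∧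
      (∃ q : PBR Λ S, PBR.elt t b₁ b₂ = PBR.mul θ (PBR.elt s a₁ a₂) q)) ↔
      ((∃ p : S, s = t * p) ∧ (∃ q : S, t = s * q)) ∧ a₁ = b₁ := by
  constructor
  · rintro ⟨⟨p, hp⟩, ⟨q, hq⟩⟩
    match p with
    | PBR.zero => rw [PBR.mul] at hp; exact absurd hp (by simp)
    | PBR.elt r c₁ c₂ =>
    match q with
    | PBR.zero => rw [PBR.mul] at hq; exact absurd hq (by simp)
    | PBR.elt r' d₁ d₂ =>
    have H1 := mul_elt_cases θ hp
    have H2 := mul_elt_cases θ hq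
    -- first establish a₁ = b₁
    have hab : a₁ = b₁ := by
      rcases H1 with ⟨u, ha, _⟩ | ⟨ha, _⟩
      · rcases H2 with ⟨u', hb, _⟩ | ⟨hb, _⟩
        · rw [hb, ← List.append_assoc] at ha
          have := self_append_nil ha
          rw [List.append_eq_nil_iff] at this
          simpa [this.2] using hb.symm
        · exact hb.symm
      · exact ha
    refine ⟨⟨?_, ?_⟩, hab⟩
    · rcases H1 with ⟨u, ha, hs⟩ | ⟨_, r', hs⟩
      · have hu : u = [] := self_append_nil (hab ▸ ha)
        subst hu
        exact ⟨r, by simpa using hs⟩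
      · exact ⟨r', hs⟩
    · rcases H2 with ⟨u, ha, hs⟩ | ⟨_, r'', hs⟩
      · have hu : u = [] := self_append_nil (hab.symm ▸ ha)
        subst hu
        exact ⟨r', by simpa using hs⟩
      · exact ⟨r'', hs⟩
  · rintro ⟨⟨⟨p, hp⟩, ⟨q, hq⟩⟩, rfl⟩
    constructor
    · refine ⟨PBR.elt p b₂ a₂, ?_⟩
      rw [PBR.mul]
      have hex : ∃ u : List Λ, b₂ = u ++ b₂ := ⟨[], rfl⟩
      rw [dif_pos hex]
      have : hex.choose = [] := self_append_nil hex.choose_spec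
      simp [this, hp]
    · refine ⟨PBR.elt q a₂ b₂, ?_⟩
      rw [PBR.mul]
      have hex : ∃ u : List Λ, a₂ = u ++ a₂ := ⟨[], rfl⟩
      rw [dif_pos hex]
      have : hex.choose = [] := self_append_nil hex.choose_spec
      simp [this, hq]
end

section
/- The semigroup 𝒫_λ(θ,S) is 0-simple for any monoid S: its only two-sided ideals are {𝟎} and the whole semigroup. Specifically, for any nonzero elements (s, a₁^{-1}a₂) and (t, b₁^{-1}b₂) and any nonempty word u ∈ λ*, ((θ^{|u|}(t))^{-1}, a₁^{-1}ub₁) * (t, b₁^{-1}b₂) * (s, (ub₂)^{-1}a₂) = (s, a₁^{-1}a₂). -/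
open scoped Classical

namespace PBRaux

theorem choose_eq {Λ : Type*} {L M w₀ : List Λ} (h : ∃ w : List Λ, L = w ++ M)
    (hw : L = w₀ ++ M) : h.choose = w₀ :=
  List.append_cancel_right (h.choose_spec.symm.trans hw)

theorem mul_elt_left {Λ S : Type*} [Monoid S] (θ : S →* S) {b₁ a₂ : List Λ}
    (w : List Λ) (hw : b₁ = w ++ a₂) (s t : S) (a₁ b₂ : List Λ) :
    PBR.mul θ (PBR.elt s a₁ a₂) (PBR.elt t b₁ b₂) =
      PBR.elt ((⇑θ)^[w.length] s * t) (w ++ a₁) b₂ := by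
  have h : ∃ u : List Λ, b₁ = u ++ a₂ := ⟨w, hw⟩
  show (if h : ∃ u : List Λ, b₁ = u ++ a₂ then _ else _) = _
  rw [dif_pos h, choose_eq h hw]

theorem mul_elt_right {Λ S : Type*} [Monoid S] (θ : S →* S) {b₁ a₂ : List Λ}
    (hne : ¬∃ u : List Λ, b₁ = u ++ a₂)
    (w : List Λ) (hw : a₂ = w ++ b₁) (s t : S) (a₁ b₂ : List Λ) :
    PBR.mul θ (PBR.elt s a₁ a₂) (PBR.elt t b₁ b₂) =
      PBR.elt (s * (⇑θ)^[w.length] t) a₁ (w ++ b₂) := by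
  have h' : ∃ v : List Λ, a₂ = v ++ b₁ := ⟨w, hw⟩
  show (if h : ∃ u : List Λ, b₁ = u ++ a₂ then _ else _) = _
  rw [dif_neg hne, dif_pos h', choose_eq h' hw]

theorem mul_zero_right {Λ S : Type*} [Monoid S] (θ : S →* S) (x : PBR Λ S) :
    PBR.mul θ x PBR.zero = PBR.zero := by
  cases x <;> rfl

theorem key {Λ S : Type*} [Monoid S] (θ : S →* S) (hθ : ∀ s : S, IsUnit (θ s))
    (u : List Λ) (hu : u ≠ []) (s t : S) (a₁ a₂ b₁ b₂ : List Λ) :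
    ∃ r : S, r * (⇑θ)^[u.length] t = 1 ∧ (⇑θ)^[u.length] t * r = 1 ∧
      PBR.mul θ (PBR.mul θ (PBR.elt r a₁ (u ++ b₁)) (PBR.elt t b₁ b₂))
          (PBR.elt s (u ++ b₂) a₂) =
        PBR.elt s a₁ a₂ := by
  have hlen : 0 < u.length := List.length_pos_iff.mpr hu
  have hunit : IsUnit ((⇑θ)^[u.length] t) := by
    obtain ⟨n, hn⟩ : ∃ n, u.length = n + 1 := ⟨u.length - 1, by omega⟩
    rw [hn, Function.iterate_succ_apply']
    exact hθ _
  obtain ⟨v, hv⟩ := hunit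
  refine ⟨↑v⁻¹, by rw [← hv]; exact v.inv_mul, by rw [← hv]; exact v.mul_inv, ?_⟩
  have hne : ¬∃ w : List Λ, b₁ = w ++ (u ++ b₁) := by
    rintro ⟨w, hw⟩
    have := congrArg List.length hw
    simp at this
    omega
  rw [mul_elt_right θ hne u rfl, mul_elt_left θ ([] : List Λ) (List.nil_append _).symm]
  simp only [List.length_nil, Function.iterate_zero, id_eq, List.nil_append]
  rw [← hv, v.inv_mul, one_mul]

end PBRaux

/-- `𝒫_λ(θ,S)` is `0`-simple, witnessed by the explicit identity
`((θ^{|u|}(t))⁻¹, a₁⁻¹ub₁) * (t, b₁⁻¹b₂) * (s, (ub₂)⁻¹a₂) = (s, a₁⁻¹a₂)`. -/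
theorem pbr_zero_simple {Λ S : Type*} [Monoid S] [Nonempty Λ] (θ : S →* S)
    (hθ : ∀ s : S, IsUnit (θ s)) :
    (∀ I : Set (PBR Λ S), I.Nonempty →
        (∀ x ∈ I, ∀ y : PBR Λ S, PBR.mul θ x y ∈ I ∧ PBR.mul θ y x ∈ I) →
        I = {PBR.zero} ∨ I = Set.univ) ∧
      (∀ (u : List Λ), u ≠ [] → ∀ (s t : S) (a₁ a₂ b₁ b₂ : List Λ),
        ∃ r : S, r * (⇑θ)^[u.length] t = 1 ∧ (⇑θ)^[u.length] t * r = 1 ∧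
          PBR.mul θ (PBR.mul θ (PBR.elt r a₁ (u ++ b₁)) (PBR.elt t b₁ b₂))
              (PBR.elt s (u ++ b₂) a₂) =
            PBR.elt s a₁ a₂) := by
  constructor
  · intro I hne hI
    by_cases h0 : I ⊆ {PBR.zero}
    · left
      exact Set.Subset.antisymm h0 (by
        rintro x rfl
        obtain ⟨y, hy⟩ := hne
        have := (hI y hy PBR.zero).1
        rwa [PBRaux.mul_zero_right] at this)
    · right
      obtain ⟨x, hx, hxne⟩ : ∃ x ∈ I, x ≠ PBR.zero := by
        by_contra h
        push_neg at h
        exact h0 fun x hx => h x hx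
      cases x with
      | zero => exact absurd rfl hxne
      | elt t b₁ b₂ =>
        apply Set.eq_univ_of_forall
        intro y
        cases y with
        | zero =>
          have := (hI _ hx PBR.zero).1
          rwa [PBRaux.mul_zero_right] at this
        | elt s a₁ a₂ =>
          obtain ⟨l⟩ := ‹Nonempty Λ›
          obtain ⟨r, _, _, hkey⟩ :=
            PBRaux.key θ hθ [l] (by simp) s t a₁ a₂ b₁ b₂
          rw [← hkey]
          exact (hI _ ((hI _ hx (PBR.elt r a₁ ([l] ++ b₁))).2) _).1
  · exact PBRaux.key θ hθ
end

section
/- If the monoid S has more than one element, then the relation 𝔠 on 𝒫_λ(θ,S) defined by (x, a₁^{-1}a₂) 𝔠 (y, b₁^{-1}b₂) iff a₁^{-1}a₂ = b₁^{-1}b₂, together with 𝟎 𝔠 𝟎, is a nontrivial congruence on 𝒫_λ(θ,S); hence 𝒫_λ(θ,S) is not congruence-free. -/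
open scoped Classical

/-- if `S` has more than one element, then identifying elements with the
same word pair gives a nontrivial congruence on `𝒫_λ(θ,S)`; hence `𝒫_λ(θ,S)` is not
congruence-free. -/
theorem pbr_nontrivial_congruence {Λ S : Type*} [Monoid S] (θ : S →* S)
    (hθ : ∀ s : S, IsUnit (θ s)) (hS : ∃ s t : S, s ≠ t) :
    ∃ c : PBR Λ S → PBR Λ S → Prop,
      (c = fun x y => match x, y with
        | PBR.zero, PBR.zero => True
        | PBR.elt _ a₁ a₂, PBR.elt _ b₁ b₂ => a₁ = b₁ ∧ a₂ = b₂
        | _, _ => False) ∧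
      Equivalence c ∧
      (∀ x y z : PBR Λ S, c x y →
        c (PBR.mul θ z x) (PBR.mul θ z y) ∧ c (PBR.mul θ x z) (PBR.mul θ y z)) ∧
      (∃ x y : PBR Λ S, c x y ∧ x ≠ y) ∧
      (∃ x y : PBR Λ S, ¬ c x y) := by
  refine ⟨_, rfl, ?_, ?_, ?_, ?_⟩
  · constructor
    · intro x; cases x <;> simp
    · intro x y h; cases x <;> cases y <;> simp_all
    · intro x y z h1 h2; cases x <;> cases y <;> cases z <;> simp_all
  · intro x y z h
    cases x <;> cases y <;> cases z <;> simp_all [PBR.mul] <;>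
      obtain ⟨h1, h2⟩ := h <;> subst h1 <;> subst h2 <;>
      constructor <;> split_ifs <;> simp
  · obtain ⟨s, t, hst⟩ := hS
    exact ⟨PBR.elt s [] [], PBR.elt t [] [], ⟨rfl, rfl⟩, by simp [hst]⟩
  · exact ⟨PBR.zero, PBR.elt 1 [] [], by simp⟩
end

section
/- An element (s, a₁^{-1}a₂) of 𝒫_λ(θ,S) belongs to the group of units of the monoid 𝒫_λ(θ,S) (with identity (1_S, ε^{-1}ε)) if and only if s belongs to the group of units of S and a₁ = a₂ = ε. -/
open scoped Classical

lemma pbr_mul_nil {Λ S : Type*} [Monoid S] (θ : S →* S) (s t : S) :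
    PBR.mul θ (PBR.elt s ([] : List Λ) []) (PBR.elt t [] []) =
      PBR.elt (s * t) [] [] := by
  have h : ∃ u : List Λ, ([] : List Λ) = u ++ [] := ⟨[], rfl⟩
  have hc : h.choose = [] := by simpa using h.choose_spec.symm
  simp only [PBR.mul]
  rw [dif_pos h, hc]
  simp

/-- `(s, a₁⁻¹a₂)` belongs to the group of units of the monoid
`𝒫_λ(θ,S)` (with identity `(1_S, ε⁻¹ε)`) iff `s` is a unit of `S` and `a₁ = a₂ = ε`. -/
theorem pbr_units_iff {Λ S : Type*} [Monoid S] (θ : S →* S)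
    (hθ : ∀ s : S, IsUnit (θ s)) (s : S) (a₁ a₂ : List Λ) :
    (∃ y : PBR Λ S,
        PBR.mul θ (PBR.elt s a₁ a₂) y = PBR.elt (1 : S) [] [] ∧
        PBR.mul θ y (PBR.elt s a₁ a₂) = PBR.elt (1 : S) [] []) ↔
      IsUnit s ∧ a₁ = [] ∧ a₂ = [] := by
  constructor
  · rintro ⟨y, hy1, hy2⟩
    cases y with
    | zero => simp [PBR.mul] at hy1
    | elt t b₁ b₂ =>
      -- From hy1 obtain: a₁ = [], b₂ = [], b₁ = a₂, s * t = 1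
      have key : a₁ = [] ∧ b₂ = [] ∧ b₁ = a₂ ∧ s * t = 1 := by
        rw [PBR.mul] at hy1
        split_ifs at hy1 with h h'
        · injection hy1 with e1 e2 e3
          obtain ⟨hc, ha⟩ := List.append_eq_nil_iff.mp e2
          have hb : b₁ = a₂ := by simpa [hc] using h.choose_spec
          rw [hc] at e1; simp at e1
          exact ⟨ha, e3, hb, e1⟩
        · injection hy1 with e1 e2 e3
          obtain ⟨hc, hb⟩ := List.append_eq_nil_iff.mp e3
          have ha2 : a₂ = b₁ := by simpa [hc] using h'.choose_spec
          rw [hc] at e1; simp at e1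
          exact ⟨e2, hb, ha2.symm, e1⟩
      obtain ⟨ha1, hb2, hb1, hst⟩ := key
      subst ha1 hb2 hb1
      -- Now use hy2 : mul (elt t a₂ []) (elt s [] a₂) = elt 1 [] []
      rw [PBR.mul] at hy2
      split_ifs at hy2 with h
      · injection hy2 with e1 e2 e3
        have hc : h.choose = [] := by simpa using h.choose_spec.symm
        rw [hc] at e1 e2
        simp at e1 e2
        subst e2
        exact ⟨⟨⟨s, t, hst, e1⟩, rfl⟩, rfl, e3⟩
  · rintro ⟨hs, rfl, rfl⟩
    obtain ⟨u, rfl⟩ := hs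
    exact ⟨PBR.elt (↑u⁻¹) [] [], by simp [pbr_mul_nil], by simp [pbr_mul_nil]⟩
end

section
/- If (S, τ_S) is a Hausdorff semitopological semigroup (monoid) and θ: S → H_S(1) is a continuous homomorphism, then 𝒫_λ(θ,S) endowed with the topology τ_st in which each slice S_{a₁^{-1}a₂} = {(t, a₁^{-1}a₂) : t ∈ S} carries the topology of (S, τ_S), these slices are open, and 𝟎 is an isolated point, is a Hausdorff semitopological semigroup (i.e., the operation * is separately continuous). -/
open scoped Classical

instance listDiscreteTop (Λ : Type*) : TopologicalSpace (List Λ) := ⊥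

/-- The topology `τ_st` on `𝒫_λ(θ,S)`: the topological sum of copies of `S` indexed by
the nonzero elements of `P_λ` (word pairs) together with the isolated point `𝟎`. -/
instance pbrTop (Λ S : Type*) [TopologicalSpace S] : TopologicalSpace (PBR Λ S) :=
  TopologicalSpace.coinduced
    (fun p : (S × (List Λ × List Λ)) ⊕ Unit =>
      match p with
      | Sum.inl q => PBR.elt q.1 q.2.1 q.2.2
      | Sum.inr _ => PBR.zero)
    inferInstance

section Aux
variable {Λ S : Type*} [TopologicalSpace S]

instance : DiscreteTopology (List Λ) := ⟨rfl⟩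

/-- The canonical map from the sum to the PBR. -/
def pbrE : (S × (List Λ × List Λ)) ⊕ Unit → PBR Λ S :=
  fun p =>
      match p with
      | Sum.inl q => PBR.elt q.1 q.2.1 q.2.2
      | Sum.inr _ => PBR.zero

def pbrEinv : PBR Λ S → (S × (List Λ × List Λ)) ⊕ Unit
  | PBR.zero => Sum.inr ()
  | PBR.elt s a b => Sum.inl (s, (a, b))

lemma pbrE_leftinv : Function.LeftInverse (pbrEinv (Λ := Λ) (S := S)) pbrE := by
  rintro (⟨s, a, b⟩ | ⟨⟩) <;> rfl

lemma pbrE_rightinv : Function.RightInverse (pbrEinv (Λ := Λ) (S := S)) pbrE := by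
  rintro (_ | ⟨s, a, b⟩) <;> rfl

lemma pbrTop_eq : (pbrTop Λ S : TopologicalSpace (PBR Λ S)) =
    TopologicalSpace.coinduced pbrE inferInstance := rfl

lemma continuous_pbrE : Continuous (pbrE (Λ := Λ) (S := S)) :=
  continuous_iff_coinduced_le.2 (le_of_eq pbrTop_eq.symm)

lemma continuous_pbrEinv : Continuous (pbrEinv (Λ := Λ) (S := S)) := by
  rw [continuous_iff_coinduced_le, pbrTop_eq, coinduced_compose]
  have : pbrEinv ∘ pbrE = (id : (S × (List Λ × List Λ)) ⊕ Unit → _) :=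
    funext pbrE_leftinv
  rw [this, coinduced_id]

def pbrHomeo : ((S × (List Λ × List Λ)) ⊕ Unit) ≃ₜ PBR Λ S :=
  { toFun := pbrE
    invFun := pbrEinv
    left_inv := pbrE_leftinv
    right_inv := pbrE_rightinv
    continuous_toFun := continuous_pbrE
    continuous_invFun := continuous_pbrEinv }

lemma continuous_elt (a b : List Λ) : Continuous fun s : S => PBR.elt s a b := by
  have : (fun s : S => PBR.elt s a b) =
      pbrE ∘ (fun s : S => Sum.inl (s, (a, b))) := rfl
  rw [this]
  exact continuous_pbrE.comp (continuous_inl.comp (continuous_id.prodMk continuous_const))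

lemma continuous_from_pbr {X : Type*} [TopologicalSpace X] {f : PBR Λ S → X}
    (h : ∀ a b : List Λ, Continuous fun s : S => f (PBR.elt s a b)) : Continuous f := by
  have : f = (f ∘ pbrE) ∘ pbrEinv := by funext x; simp [Function.comp, pbrE_rightinv x]
  rw [this]
  apply Continuous.comp _ continuous_pbrEinv
  rw [continuous_sum_dom]
  constructor
  · -- on S × (List Λ × List Λ)
    show Continuous fun q : S × (List Λ × List Λ) => f (PBR.elt q.1 q.2.1 q.2.2)
    rw [continuous_iff_continuousAt]
    rintro ⟨s₀, p₀⟩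
    have hmem : {q : S × (List Λ × List Λ) | q.2 = p₀} ∈ nhds (s₀, p₀) := by
      refine IsOpen.mem_nhds ?_ rfl
      exact (isOpen_discrete {p₀}).preimage continuous_snd
    have hcong : (fun q : S × (List Λ × List Λ) => f (PBR.elt q.1 q.2.1 q.2.2)) =ᶠ[nhds (s₀, p₀)]
        fun q => f (PBR.elt q.1 p₀.1 p₀.2) := by
      filter_upwards [hmem] with q hq
      rw [hq]
    exact (((h p₀.1 p₀.2).comp continuous_fst).continuousAt).congr hcong.symm
  · exact continuous_of_discreteTopology

end Aux

/-- if `(S, τ_S)` is a Hausdorff semitopological monoid and `θ` is a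
continuous homomorphism into the group of units, then `(𝒫_λ(θ,S), τ_st)` is a
Hausdorff semitopological semigroup. -/
theorem pbr_semitopological {Λ S : Type*} [Monoid S] [TopologicalSpace S] [T2Space S]
    (hl : ∀ a : S, Continuous fun x : S => a * x)
    (hr : ∀ a : S, Continuous fun x : S => x * a)
    (θ : S →* S) (hθ : ∀ s : S, IsUnit (θ s)) (hθc : Continuous θ) :
    T2Space (PBR Λ S) ∧
      ∀ x : PBR Λ S,
        (Continuous fun y : PBR Λ S => PBR.mul θ x y) ∧
        (Continuous fun y : PBR Λ S => PBR.mul θ y x) := by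
  constructor
  · exact (pbrHomeo (Λ := Λ) (S := S)).symm.isEmbedding.t2Space
  · intro x
    constructor
    · -- left translation
      cases x with
      | zero => exact continuous_const
      | elt t a₁ a₂ =>
        apply continuous_from_pbr
        intro b₁ b₂
        by_cases hc : ∃ u : List Λ, b₁ = u ++ a₂
        · have heq : (fun s : S => PBR.mul θ (PBR.elt t a₁ a₂) (PBR.elt s b₁ b₂)) =
              fun s => PBR.elt ((⇑θ)^[hc.choose.length] t * s) (hc.choose ++ a₁) b₂ := by
            funext s; simp only [PBR.mul, dif_pos hc]
          rw [heq]
          exact (continuous_elt _ _).comp (hl _)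
        · by_cases hc' : ∃ v : List Λ, a₂ = v ++ b₁
          · have heq : (fun s : S => PBR.mul θ (PBR.elt t a₁ a₂) (PBR.elt s b₁ b₂)) =
                fun s => PBR.elt (t * (⇑θ)^[hc'.choose.length] s) a₁ (hc'.choose ++ b₂) := by
              funext s; simp only [PBR.mul, dif_neg hc, dif_pos hc']
            rw [heq]
            exact (continuous_elt _ _).comp ((hl t).comp (hθc.iterate _))
          · have heq : (fun s : S => PBR.mul θ (PBR.elt t a₁ a₂) (PBR.elt s b₁ b₂)) =
                fun _ => PBR.zero := by
              funext s; simp only [PBR.mul, dif_neg hc, dif_neg hc']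
            rw [heq]; exact continuous_const
    · -- right translation
      cases x with
      | zero =>
        have heq : (fun y : PBR Λ S => PBR.mul θ y PBR.zero) = fun _ => PBR.zero := by
          funext y; cases y <;> rfl
        rw [heq]; exact continuous_const
      | elt t a₁ a₂ =>
        apply continuous_from_pbr
        intro b₁ b₂
        by_cases hc : ∃ u : List Λ, a₁ = u ++ b₂
        · have heq : (fun s : S => PBR.mul θ (PBR.elt s b₁ b₂) (PBR.elt t a₁ a₂)) =
              fun s => PBR.elt ((⇑θ)^[hc.choose.length] s * t) (hc.choose ++ b₁) a₂ := by
            funext s; simp only [PBR.mul, dif_pos hc]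
          rw [heq]
          exact (continuous_elt _ _).comp ((hr t).comp (hθc.iterate _))
        · by_cases hc' : ∃ v : List Λ, b₂ = v ++ a₁
          · have heq : (fun s : S => PBR.mul θ (PBR.elt s b₁ b₂) (PBR.elt t a₁ a₂)) =
                fun s => PBR.elt (s * (⇑θ)^[hc'.choose.length] t) b₁ (hc'.choose ++ a₂) := by
              funext s; simp only [PBR.mul, dif_neg hc, dif_pos hc']
            rw [heq]
            exact (continuous_elt _ _).comp (hr _)
          · have heq : (fun s : S => PBR.mul θ (PBR.elt s b₁ b₂) (PBR.elt t a₁ a₂)) =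
                fun _ => PBR.zero := by
              funext s; simp only [PBR.mul, dif_neg hc, dif_neg hc']
            rw [heq]; exact continuous_const
end

section
/- Let τ be a Hausdorff topology on 𝒫_λ(θ,S) for which all shifts x ↦ a*x and x ↦ x*a are continuous, and suppose S_ε = {(s, ε^{-1}ε) : s ∈ S} is closed in (𝒫_λ(θ,S), τ). Then for all words u, v ∈ λ*, the set S_{u^{-1}v} = {(s, u^{-1}v) : s ∈ S} is closed in (𝒫_λ(θ,S), τ). -/
open scoped Classical

namespace PBRAux

open PBR

variable {Λ S : Type*} [Monoid S] (θ : S →* S)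

lemma mul_zero_left (x : PBR Λ S) : PBR.mul θ PBR.zero x = PBR.zero := rfl

lemma mul_zero_right (s : S) (a b : List Λ) :
    PBR.mul θ (PBR.elt s a b) PBR.zero = PBR.zero := rfl

lemma mul_case1 (s t : S) (a₁ a₂ b₁ b₂ w : List Λ) (hb : b₁ = w ++ a₂) :
    PBR.mul θ (PBR.elt s a₁ a₂) (PBR.elt t b₁ b₂)
      = PBR.elt ((⇑θ)^[w.length] s * t) (w ++ a₁) b₂ := by
  subst hb
  have h : ∃ u : List Λ, w ++ a₂ = u ++ a₂ := ⟨w, rfl⟩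
  have hw : h.choose = w := List.append_cancel_right h.choose_spec.symm
  simp only [PBR.mul, dif_pos h, hw]

lemma mul_case2 (s t : S) (a₁ a₂ b₁ b₂ w : List Λ)
    (h1 : ¬ ∃ u : List Λ, b₁ = u ++ a₂) (hw : a₂ = w ++ b₁) :
    PBR.mul θ (PBR.elt s a₁ a₂) (PBR.elt t b₁ b₂)
      = PBR.elt (s * (⇑θ)^[w.length] t) a₁ (w ++ b₂) := by
  subst hw
  have h' : ∃ v : List Λ, w ++ b₁ = v ++ b₁ := ⟨w, rfl⟩
  have hw' : h'.choose = w := List.append_cancel_right h'.choose_spec.symm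
  simp only [PBR.mul, dif_neg h1, dif_pos h', hw']

lemma mul_case0 (s t : S) (a₁ a₂ b₁ b₂ : List Λ)
    (h1 : ¬ ∃ u : List Λ, b₁ = u ++ a₂) (h2 : ¬ ∃ v : List Λ, a₂ = v ++ b₁) :
    PBR.mul θ (PBR.elt s a₁ a₂) (PBR.elt t b₁ b₂) = PBR.zero := by
  simp only [PBR.mul, dif_neg h1, dif_neg h2]

lemma iter_one (n : ℕ) : (⇑θ)^[n] (1 : S) = 1 := Function.iterate_fixed (map_one θ) n

/-- Right multiplication by `(1, v⁻¹ε)` lands in `S_ε` exactly on the slice `S_{w⁻¹b}` test. -/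
lemma R_mem (s : S) (w b v : List Λ) :
    (∃ r : S, PBR.mul θ (PBR.elt s w b) (PBR.elt (1 : S) v []) = PBR.elt r [] [])
      ↔ (w = [] ∧ b = v) := by
  by_cases h2 : ∃ z : List Λ, v = z ++ b
  · obtain ⟨z, rfl⟩ := h2
    rw [mul_case1 θ s 1 w b (z ++ b) [] z rfl]
    simp [PBR.elt.injEq, List.append_eq_nil_iff, List.self_eq_append_left, and_comm]
  · by_cases h3 : ∃ z : List Λ, b = z ++ v
    · obtain ⟨z, rfl⟩ := h3
      rw [mul_case2 θ s 1 w (z ++ v) v [] z h2 rfl]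
      simp [PBR.elt.injEq, List.append_eq_nil_iff, List.append_left_eq_self]
    · rw [mul_case0 θ s 1 w b v [] h2 h3]
      simp only [reduceCtorEq, exists_false, false_iff, not_and]
      rintro - rfl
      exact h2 ⟨[], rfl⟩

end PBRAux

/-- if `τ` is a Hausdorff topology on `𝒫_λ(θ,S)` with continuous
translations and the slice `S_ε` is closed, then every slice `S_{u⁻¹v}` is closed. -/
theorem pbr_slices_closed {Λ S : Type*} [Monoid S] (θ : S →* S)
    (hθ : ∀ s : S, IsUnit (θ s))
    [TopologicalSpace (PBR Λ S)] [T2Space (PBR Λ S)]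
    (hl : ∀ a : PBR Λ S, Continuous fun x : PBR Λ S => PBR.mul θ a x)
    (hr : ∀ a : PBR Λ S, Continuous fun x : PBR Λ S => PBR.mul θ x a)
    (hε : IsClosed {x : PBR Λ S | ∃ s : S, x = PBR.elt s [] []}) :
    ∀ u v : List Λ, IsClosed {x : PBR Λ S | ∃ s : S, x = PBR.elt s u v} := by
  open PBRAux in
  intro u v
  -- `L x = (1,ε⁻¹u) x`, `E x = (1,u⁻¹ε) (L x)`, `g x = (L x) (1,v⁻¹ε)`.
  have key : {x : PBR Λ S | ∃ s : S, x = PBR.elt s u v}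
      = {x : PBR Λ S |
          PBR.mul θ (PBR.elt (1 : S) u []) (PBR.mul θ (PBR.elt (1 : S) [] u) x) = x}
        ∩ (fun x : PBR Λ S => PBR.mul θ (PBR.mul θ (PBR.elt (1 : S) [] u) x)
            (PBR.elt (1 : S) v [])) ⁻¹' {x : PBR Λ S | ∃ s : S, x = PBR.elt s [] []} := by
    ext x
    simp only [Set.mem_setOf_eq, Set.mem_inter_iff, Set.mem_preimage]
    cases x with
    | zero =>
      rw [mul_zero_right θ, mul_zero_right θ, mul_zero_left θ]
      simp
    | elt s a b =>
      by_cases h1 : ∃ w : List Λ, a = w ++ u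
      · obtain ⟨w, rfl⟩ := h1
        have hL : PBR.mul θ (PBR.elt (1 : S) [] u) (PBR.elt s (w ++ u) b)
            = PBR.elt s w b := by
          rw [mul_case1 θ 1 s [] u (w ++ u) b w rfl]
          simp [iter_one]
        have hE : PBR.mul θ (PBR.elt (1 : S) u []) (PBR.elt s w b)
            = PBR.elt s (w ++ u) b := by
          rw [mul_case1 θ 1 s u [] w b w (by simp)]
          simp [iter_one]
        rw [hL, hE, R_mem θ s w b v]
        simp [PBR.elt.injEq, List.append_left_eq_self, and_comm, eq_comm (a := s)]
      · have ha : ∀ w : List Λ, ¬ a = w ++ u := fun w hw => h1 ⟨w, hw⟩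
        by_cases h1' : ∃ w : List Λ, u = w ++ a
        · obtain ⟨w, rfl⟩ := h1'
          have hwne : w ≠ [] := by
            rintro rfl
            exact h1 ⟨[], by simp⟩
          have hL : PBR.mul θ (PBR.elt (1 : S) [] (w ++ a)) (PBR.elt s a b)
              = PBR.elt ((⇑θ)^[w.length] s) [] (w ++ b) := by
            rw [mul_case2 θ 1 s [] (w ++ a) a b w h1 rfl]
            simp
          have hE : PBR.mul θ (PBR.elt (1 : S) (w ++ a) [])
              (PBR.elt ((⇑θ)^[w.length] s) [] (w ++ b))
              = PBR.elt ((⇑θ)^[w.length] s) (w ++ a) (w ++ b) := by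
            rw [mul_case1 θ 1 ((⇑θ)^[w.length] s) (w ++ a) [] [] (w ++ b) [] rfl]
            simp [iter_one]
          rw [hL, hE]
          have hne : w ++ a ≠ a := fun h => hwne (List.append_left_eq_self.mp h)
          constructor
          · rintro ⟨s', h⟩
            injection h with _ h2 _
            exact absurd h2.symm hne
          · rintro ⟨h, -⟩
            injection h with _ h2 _
            exact absurd h2 hne
        · have hL : PBR.mul θ (PBR.elt (1 : S) [] u) (PBR.elt s a b) = PBR.zero :=
            mul_case0 θ 1 s [] u a b h1 h1'
          rw [hL, mul_zero_right θ, mul_zero_left θ]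
          simp only [reduceCtorEq, exists_false, and_false, iff_false, not_exists,
            PBR.elt.injEq, not_and]
          rintro s' - rfl -
          exact h1 ⟨[], rfl⟩
  rw [key]
  exact (isClosed_eq ((hl _).comp (hl _)) continuous_id).inter
    (IsClosed.preimage ((hr _).comp (hl _)) hε)
end
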